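/- arXiv:0804.2528 — 3 statements merged into one kernel-verified Lean document; each statement's English description precedes it below -/
import Mathlib

section
/- Fix an integer q ≥ 2 and set H = 1 − 1/(2q). Then lim_{n→∞} (1/(n log n)) Σ_{k,l=0}^{n−1} ρ_H(k−l)^q = 2 c_q; equivalently, the constant σ_H² := lim_{n→∞} (q!/(n log n)) Σ_{k,l=0}^{n−1} ρ_H(k−l)^q exists and equals 2 q! ((2q−1)(q−1)/(2q²))^q. -/
open Finset Filter

/-- Covariance of unit increments of fBm with Hurst index `H`. -/
noncomputable def rho (H : ℝ) (r : ℤ) : ℝ :=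
  (|(r:ℝ) + 1| ^ (2*H) - 2 * |(r:ℝ)| ^ (2*H) + |(r:ℝ) - 1| ^ (2*H)) / 2

/-!
Up to the factor `r ^ (2H) / 2`, `ρ_H(r)` is the symmetric second difference of `y ↦ y ^ (2H)`
at `1` with step `1/r`, so `ρ_H(r) ~ H (2H - 1) r ^ (2H - 2)`; for `H = 1 - 1/(2q)` this gives
`r ρ_H(r) ^ q → c_q`. Grouping the double sum along the diagonals `k - l = ± r` turns it into
`Σ_{r<n} (n - r) (ρ_H(r) ^ q + ρ_H(-r) ^ q) - n ρ_H(0) ^ q`. As the terms are `~ c_q / r`, the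
part with weight `n` is `~ 2 c_q n log n` by comparison with the harmonic series, while the part
with weight `r` is only `O(n)`.
-/

open Real Topology

theorem tendsto_symmetricSecondDifference_div_sq {f f' : ℝ → ℝ} {x f'' : ℝ}
    (hf : ∀ᶠ y in 𝓝 x, HasDerivAt f (f' y) y) (hf' : HasDerivAt f' f'' x) :
    Tendsto (fun h => (f (x + h) + f (x - h) - 2 * f x) / h ^ 2) (𝓝[>] 0) (𝓝 f'') := by
  have hplus : Tendsto (fun h => x + h) (𝓝 0) (𝓝 x) :=
    (continuous_const_add x).tendsto' 0 x (add_zero x)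
  have hminus : Tendsto (fun h => x - h) (𝓝 0) (𝓝 x) :=
    (continuous_sub_left x).tendsto' 0 x (sub_zero x)
  have hnum : ∀ᶠ h in 𝓝[>] (0:ℝ), HasDerivAt (fun h => f (x + h) + f (x - h) - 2 * f x)
      (f' (x + h) - f' (x - h)) h := by
    refine eventually_nhdsWithin_of_eventually_nhds ?_
    filter_upwards [hplus.eventually hf, hminus.eventually hf] with h h₁ h₂
    have := ((h₁.comp h ((hasDerivAt_id h).const_add x)).add
      (h₂.comp h ((hasDerivAt_id h).const_sub x))).sub_const (2 * f x)
    simpa [sub_eq_add_neg] using this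
  have hnum_zero : Tendsto (fun h => f (x + h) + f (x - h) - 2 * f x) (𝓝[>] 0) (𝓝 0) := by
    have hcont : ContinuousAt f x := hf.self_of_nhds.continuousAt
    refine tendsto_nhdsWithin_of_tendsto_nhds ?_
    simpa [two_mul] using ((hcont.tendsto.comp hplus).add (hcont.tendsto.comp hminus)).sub
      (tendsto_const_nhds (x := 2 * f x))
  have hden_zero : Tendsto (fun h : ℝ => h ^ 2) (𝓝[>] 0) (𝓝 0) :=
    tendsto_nhdsWithin_of_tendsto_nhds (by simpa using (continuous_pow 2).tendsto (0:ℝ))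
  -- the symmetric difference quotient of `f'` is the mean of its right and left slopes
  have hslopes : Tendsto (fun h => (f' (x + h) - f' (x - h)) / (2 * h)) (𝓝[>] 0) (𝓝 f'') := by
    have hleft := hf'.tendsto_slope_zero_left.comp (neg_zero (G := ℝ) ▸ tendsto_neg_nhdsGT_neg)
    have := (hf'.tendsto_slope_zero_right.add hleft).div_const 2
    rw [← two_mul, mul_div_cancel_left₀ _ two_ne_zero] at this
    refine this.congr' (eventually_nhdsWithin_of_forall fun h (hh : 0 < h) => ?_)
    simp only [Function.comp_apply, smul_eq_mul, sub_eq_add_neg]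
    field_simp
    ring
  exact HasDerivAt.lhopital_zero_nhdsGT hnum
    (Eventually.of_forall fun h => by simpa using hasDerivAt_pow 2 h)
    (eventually_nhdsWithin_of_forall fun h (hh : 0 < h) => by positivity) hnum_zero hden_zero
    hslopes

theorem sum_range_sum_range_sub {R : Type*} [CommRing R] (F : ℤ → R) (n : ℕ) :
    ∑ k ∈ range n, ∑ l ∈ range n, F (k - l)
      = ∑ r ∈ range n, ((n:R) - r) * (F r + F (-r)) - n * F 0 := by
  induction n with
  | zero => simp
  | succ n ih =>
    have hrow : ∑ l ∈ range (n + 1), F (n - l) = ∑ r ∈ range (n + 1), F r := by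
      rw [← sum_range_reflect]
      exact sum_congr rfl fun r hr => congrArg F (by have := mem_range.1 hr; omega)
    have hcol : ∑ k ∈ range n, F (k - n) = ∑ r ∈ range n, F (-r - 1) := by
      rw [← sum_range_reflect]
      exact sum_congr rfl fun r hr => congrArg F (by have := mem_range.1 hr; omega)
    have hlhs : ∑ k ∈ range (n + 1), ∑ l ∈ range (n + 1), F (k - l)
        = ∑ k ∈ range n, ∑ l ∈ range n, F (k - l)
          + ∑ k ∈ range n, F (k - n) + ∑ l ∈ range (n + 1), F (n - l) := by
      simp only [sum_range_succ, sum_add_distrib]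
      ring
    have hweight : ∀ r : ℕ, (((n + 1 : ℕ) : R) - r) * (F r + F (-r))
        = ((n:R) - r) * (F r + F (-r)) + (F r + F (-r)) := fun r => by push_cast; ring
    rw [hlhs, ih, hrow, hcol, sum_congr rfl fun r _ => hweight r, sum_add_distrib,
      sum_range_succ (fun r : ℕ => ((n:R) - r) * (F r + F (-r))), sub_self, zero_mul, add_zero,
      sum_add_distrib, sum_range_succ' (fun r : ℕ => F (-r))]
    push_cast
    simp only [neg_add', neg_zero]
    ring

theorem tendsto_harmonic_div_log :
    Tendsto (fun n : ℕ => (harmonic n : ℝ) / log n) atTop (𝓝 1) := by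
  have hlog : Tendsto (fun n : ℕ => log n) atTop atTop :=
    tendsto_log_atTop.comp tendsto_natCast_atTop_atTop
  have := (tendsto_harmonic_sub_log.div_atTop hlog).const_add 1
  rw [add_zero] at this
  refine this.congr' ((hlog.eventually_ne_atTop 0).mono fun n hn => ?_)
  field_simp
  ring

theorem tendsto_sum_range_div_log_of_tendsto_natCast_mul {w : ℕ → ℝ} {c : ℝ}
    (hw : Tendsto (fun r : ℕ => (r:ℝ) * w r) atTop (𝓝 c)) :
    Tendsto (fun n : ℕ => (∑ r ∈ range n, w r) / log n) atTop (𝓝 c) := by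
  set g : ℕ → ℝ := fun r => 1 / ((r:ℝ) + 1)
  have hsum_g : ∀ n, ∑ r ∈ range n, g r = harmonic n := fun n => by
    simp [g, harmonic]
  have hw_zero : Tendsto w atTop (𝓝 0) := by
    have := hw.mul (tendsto_inv_atTop_zero.comp tendsto_natCast_atTop_atTop)
    rw [mul_zero] at this
    refine this.congr' ((eventually_ne_atTop 0).mono fun r hr => ?_)
    simp only [Function.comp_apply]
    field_simp [Nat.cast_ne_zero.2 hr]
  have hw_succ : Tendsto (fun r : ℕ => ((r:ℝ) + 1) * w r - c) atTop (𝓝 0) := by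
    simpa [add_mul] using (hw.add hw_zero).sub_const c
  have hwg : (fun r => w r - c * g r) =o[atTop] g := by
    have := ((Asymptotics.isLittleO_one_iff ℝ).2 hw_succ).mul_isBigO
      (Asymptotics.isBigO_refl g atTop)
    simp only [one_mul] at this
    refine this.congr_left fun r => ?_
    simp only [g]
    field_simp
  -- summing the little-o relation against the divergent harmonic series
  have hratio : Tendsto (fun n => (∑ r ∈ range n, w r) / harmonic n - c) atTop (𝓝 0) := by
    refine ((hwg.sum_range (fun r => by positivity)
      tendsto_sum_range_one_div_nat_succ_atTop).tendsto_div_nhds_zero).congr' ?_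
    filter_upwards [eventually_ne_atTop 0] with n hn
    have : (harmonic n : ℝ) ≠ 0 := by exact_mod_cast (harmonic_pos hn).ne'
    rw [sum_sub_distrib, ← mul_sum, hsum_g]
    field_simp
  have := (hratio.const_add c).mul tendsto_harmonic_div_log
  rw [add_zero, mul_one] at this
  refine this.congr' ((eventually_ne_atTop 0).mono fun n hn => ?_)
  have : (harmonic n : ℝ) ≠ 0 := by exact_mod_cast (harmonic_pos hn).ne'
  field_simp
  ring

theorem tendsto_sum_sum_sub_div_mul_log {F : ℤ → ℝ} {a b : ℝ}
    (ha : Tendsto (fun r : ℕ => (r:ℝ) * F r) atTop (𝓝 a))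
    (hb : Tendsto (fun r : ℕ => (r:ℝ) * F (-r)) atTop (𝓝 b)) :
    Tendsto (fun n : ℕ => 1 / ((n:ℝ) * log n) * ∑ k ∈ range n, ∑ l ∈ range n, F (k - l))
      atTop (𝓝 (a + b)) := by
  set G : ℕ → ℝ := fun r => F r + F (-r)
  have hG : Tendsto (fun r : ℕ => (r:ℝ) * G r) atTop (𝓝 (a + b)) := by
    simpa only [G, mul_add] using ha.add hb
  have hlog : Tendsto (fun n : ℕ => log n) atTop atTop :=
    tendsto_log_atTop.comp tendsto_natCast_atTop_atTop
  have hmain := tendsto_sum_range_div_log_of_tendsto_natCast_mul hG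
  have hcesaro := hG.cesaro.div_atTop hlog
  have hdiag := (tendsto_const_nhds (x := F 0)).div_atTop hlog
  have := (hmain.sub hcesaro).sub hdiag
  rw [sub_zero, sub_zero] at this
  refine this.congr' ((hlog.eventually_ne_atTop 0).mono fun n hn => ?_)
  have hn0 : (n:ℝ) ≠ 0 := by rintro h; simp [h] at hn
  beta_reduce
  rw [sum_range_sum_range_sub]
  simp only [G, sub_mul, sum_sub_distrib, ← mul_sum]
  field_simp

theorem rho_neg (H : ℝ) (r : ℤ) : rho H (-r) = rho H r := by
  simp only [rho, Int.cast_neg]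
  rw [show -(r:ℝ) + 1 = -((r:ℝ) - 1) by ring, show -(r:ℝ) - 1 = -((r:ℝ) + 1) by ring,
    abs_neg, abs_neg, abs_neg]
  ring

theorem rpow_two_sub_mul_rho_natCast (H : ℝ) {r : ℕ} (hr : r ≠ 0) :
    (r:ℝ) ^ (2 - 2 * H) * rho H r
      = ((1 + (r:ℝ)⁻¹) ^ (2 * H) + (1 - (r:ℝ)⁻¹) ^ (2 * H) - 2 * 1 ^ (2 * H))
          / (r:ℝ)⁻¹ ^ 2 / 2 := by
  have hr0 : (0:ℝ) < r := by positivity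
  have hr1 : (1:ℝ) ≤ r := by exact_mod_cast Nat.one_le_iff_ne_zero.2 hr
  have hplus : |(r:ℝ) + 1| = r * (1 + (r:ℝ)⁻¹) := by
    rw [abs_of_nonneg (by linarith)]; field_simp
  have hminus : |(r:ℝ) - 1| = r * (1 - (r:ℝ)⁻¹) := by
    rw [abs_of_nonneg (by linarith)]; field_simp
  have hsq : (r:ℝ) ^ (2 - 2 * H) * (r:ℝ) ^ (2 * H) = r ^ 2 := by
    rw [← rpow_add hr0, sub_add_cancel]; norm_cast
  rw [rho, Int.cast_natCast, hplus, hminus, abs_of_pos hr0,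
    mul_rpow hr0.le (by positivity), mul_rpow hr0.le (sub_nonneg.2 (inv_le_one_of_one_le₀ hr1)),
    one_rpow, inv_pow, div_inv_eq_mul]
  linear_combination (((1 + (r:ℝ)⁻¹) ^ (2 * H) + (1 - (r:ℝ)⁻¹) ^ (2 * H) - 2) / 2) * hsq

theorem tendsto_rpow_two_sub_mul_rho (H : ℝ) :
    Tendsto (fun r : ℕ => (r:ℝ) ^ (2 - 2 * H) * rho H r) atTop (𝓝 (H * (2 * H - 1))) := by
  have hderiv :
      ∀ᶠ y in 𝓝 (1:ℝ), HasDerivAt (fun y => y ^ (2 * H)) (2 * H * y ^ (2 * H - 1)) y :=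
    (eventually_ne_nhds one_ne_zero).mono fun y hy => hasDerivAt_rpow_const (Or.inl hy)
  have hderiv' : HasDerivAt (fun y => 2 * H * y ^ (2 * H - 1)) (2 * H * (2 * H - 1)) 1 := by
    simpa using ((hasDerivAt_rpow_const (p := 2 * H - 1) (Or.inl one_ne_zero)).const_mul (2 * H))
  have hinv : Tendsto (fun r : ℕ => (r:ℝ)⁻¹) atTop (𝓝[>] 0) :=
    tendsto_inv_atTop_nhdsGT_zero.comp tendsto_natCast_atTop_atTop
  have := ((tendsto_symmetricSecondDifference_div_sq hderiv hderiv').comp hinv).div_const 2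
  rw [show 2 * H * (2 * H - 1) / 2 = H * (2 * H - 1) by ring] at this
  refine this.congr' ((eventually_ne_atTop 0).mono fun r hr => ?_)
  simp only [Function.comp_apply]
  rw [rpow_two_sub_mul_rho_natCast H hr]

theorem tendsto_natCast_mul_rho_pow {q : ℕ} (hq : q ≠ 0) :
    Tendsto (fun r : ℕ => (r:ℝ) * rho (1 - 1 / (2 * (q:ℝ))) r ^ q) atTop
      (𝓝 (((2 * (q:ℝ) - 1) * ((q:ℝ) - 1) / (2 * (q:ℝ) ^ 2)) ^ q)) := by
  have hq' : (q:ℝ) ≠ 0 := Nat.cast_ne_zero.2 hq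
  set H : ℝ := 1 - 1 / (2 * (q:ℝ))
  -- `H` is chosen so that `(r ^ (2 - 2H)) ^ q = r`
  have hexp : 2 - 2 * H = (q:ℝ)⁻¹ := by simp only [H]; field_simp; ring
  have hlim : H * (2 * H - 1) = (2 * (q:ℝ) - 1) * ((q:ℝ) - 1) / (2 * (q:ℝ) ^ 2) := by
    simp only [H]; field_simp; ring
  have := (tendsto_rpow_two_sub_mul_rho H).pow q
  rw [hexp, hlim] at this
  refine this.congr fun r => ?_
  rw [mul_pow, rpow_inv_natCast_pow (Nat.cast_nonneg r) hq]

/-- Value of `σ_H²`: for `q ≥ 2` and `H = 1−1/(2q)`,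
`(1/(n log n)) Σ_{k,l=0}^{n−1} ρ_H(k−l)^q → 2 c_q` with `c_q = ((2q−1)(q−1)/(2q²))^q`. -/
theorem sigma_H_sq (q : ℕ) (hq : 2 ≤ q) :
    Tendsto (fun n : ℕ =>
        (1 / ((n:ℝ) * Real.log n)) *
          ∑ k ∈ range n, ∑ l ∈ range n, rho (1 - 1/(2*(q:ℝ))) ((k:ℤ) - (l:ℤ)) ^ q)
      atTop
      (nhds (2 * ((2*(q:ℝ) - 1) * ((q:ℝ) - 1) / (2*(q:ℝ)^2)) ^ q)) := by
  have h := tendsto_natCast_mul_rho_pow (q := q) (by omega)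
  have := tendsto_sum_sum_sub_div_mul_log (F := fun z => rho (1 - 1 / (2 * (q:ℝ))) z ^ q) h
    (by simpa only [rho_neg] using h)
  rwa [← two_mul] at this
end

section
/- Fix an integer q ≥ 2 and set H = 1 − 1/(2q). There exists a constant C > 0 such that for every integer n ≥ 2, | Σ_{r=1}^{n} ρ_H(r)^q − c_q log n | ≤ C. -/
open Finset

/-!
Writing `p = 2H` and `x = 1/m`, `ρ_H(m) = (m^p / 2) ((1 + x)^p + (1 - x)^p - 2)`, and a third-order
Taylor expansion gives `ρ_H(m) = H(2H - 1) m^(2H-2) + O(m^(2H-3))`. For `H = 1 - 1/(2q)` one has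
`(2H - 2) q = -1` and `(H(2H - 1))^q = c_q`, so `ρ_H(m)^q = c_q / m + O(1/m²)`. The errors are
summable and `∑_{r ≤ n} 1/r = log n + O(1)`.
-/

theorem abs_rpow_sub_one_le {s a : ℝ} (hs : -1 ≤ s) (hs0 : s ≤ 0)
    (ha : a ∈ Set.Icc (1/2 : ℝ) (3/2)) : |a ^ s - 1| ≤ 4 * |a - 1| := by
  have h_deriv : ∀ t ∈ Set.Icc (1/2 : ℝ) (3/2),
      HasDerivWithinAt (· ^ s) (s * t ^ (s - 1)) (Set.Icc (1/2) (3/2)) t :=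
    fun t ht => (Real.hasDerivAt_rpow_const (Or.inl (by linarith [ht.1]))).hasDerivWithinAt
  have h_deriv_le : ∀ t ∈ Set.Icc (1/2 : ℝ) (3/2), ‖s * t ^ (s - 1)‖ ≤ 4 := by
    intro t ht
    have ht0 : 0 < t := by linarith [ht.1]
    have h_rpow : t ^ (s - 1) ≤ 4 := calc
      t ^ (s - 1) ≤ (1/2 : ℝ) ^ (s - 1) :=
        Real.rpow_le_rpow_of_nonpos (by norm_num) ht.1 (by linarith)
      _ ≤ (1/2 : ℝ) ^ (-2 : ℝ) :=
        Real.rpow_le_rpow_of_exponent_ge (by norm_num) (by norm_num) (by linarith)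
      _ = 4 := by norm_num [Real.rpow_neg, Real.rpow_two]
    have hs_abs : |s| ≤ 1 := abs_le.mpr ⟨by linarith, by linarith⟩
    rw [Real.norm_eq_abs, abs_mul, abs_of_pos (Real.rpow_pos_of_pos ht0 _)]
    nlinarith [Real.rpow_pos_of_pos ht0 (s - 1)]
  simpa using (convex_Icc (1/2 : ℝ) (3/2)).norm_image_sub_le_of_norm_hasDerivWithin_le h_deriv
    h_deriv_le (by norm_num : (1 : ℝ) ∈ Set.Icc (1/2 : ℝ) (3/2)) ha

theorem abs_le_of_abs_deriv_deriv_le {u u' u'' : ℝ → ℝ} {a K : ℝ}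
    (hu : ∀ x ∈ Set.Icc 0 a, HasDerivAt u (u' x) x)
    (hu' : ∀ x ∈ Set.Icc 0 a, HasDerivAt u' (u'' x) x)
    (h0 : u 0 = 0) (h0' : u' 0 = 0) (hK : ∀ x ∈ Set.Ico 0 a, |u'' x| ≤ K * x)
    {x : ℝ} (hx : x ∈ Set.Icc 0 a) : |u x| ≤ K / 6 * x ^ 3 := by
  have h_first : ∀ y ∈ Set.Icc 0 a, ‖u' y‖ ≤ K / 2 * y ^ 2 :=
    fun y hy => image_norm_le_of_norm_deriv_right_le_deriv_boundary
      (B := fun y => K / 2 * y ^ 2)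
      (fun z hz => (hu' z hz).continuousAt.continuousWithinAt)
      (fun z hz => (hu' z (Set.Ico_subset_Icc_self hz)).hasDerivWithinAt)
      (by simp [h0'])
      (fun z => by simpa using ((hasDerivAt_pow 2 z).const_mul (K / 2)).congr_deriv (by ring))
      hK hy
  exact image_norm_le_of_norm_deriv_right_le_deriv_boundary (B := fun y => K / 6 * y ^ 3)
    (fun z hz => (hu z hz).continuousAt.continuousWithinAt)
    (fun z hz => (hu z (Set.Ico_subset_Icc_self hz)).hasDerivWithinAt)
    (by simp [h0])
    (fun z => by simpa using ((hasDerivAt_pow 3 z).const_mul (K / 6)).congr_deriv (by ring))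
    (fun z hz => h_first z (Set.Ico_subset_Icc_self hz)) hx

theorem abs_one_add_rpow_add_one_sub_rpow_sub_le {p x : ℝ} (hp1 : 1 ≤ p) (hp2 : p ≤ 2)
    (hx : x ∈ Set.Icc (0 : ℝ) (1/2)) :
    |(1 + x) ^ p + (1 - x) ^ p - 2 - p * (p - 1) * x ^ 2| ≤ 8 / 3 * x ^ 3 := by
  have h_ne : ∀ y ∈ Set.Icc (0 : ℝ) (1/2), 1 + y ≠ 0 ∧ 1 - y ≠ 0 :=
    fun y hy => ⟨by linarith [hy.1], by linarith [hy.2]⟩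
  have hu : ∀ y ∈ Set.Icc (0 : ℝ) (1/2), HasDerivAt
      (fun y => (1 + y) ^ p + (1 - y) ^ p - 2 - p * (p - 1) * y ^ 2)
      (p * (1 + y) ^ (p - 1) - p * (1 - y) ^ (p - 1) - 2 * p * (p - 1) * y) y := by
    intro y hy
    have h₁ := ((hasDerivAt_id y).const_add 1).rpow_const (p := p) (Or.inl (h_ne y hy).1)
    have h₂ := ((hasDerivAt_id y).const_sub 1).rpow_const (p := p) (Or.inl (h_ne y hy).2)
    refine (((h₁.add h₂).sub_const 2).sub
      ((hasDerivAt_pow 2 y).const_mul (p * (p - 1)))).congr_deriv ?_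
    simp only [id]; ring
  have hu' : ∀ y ∈ Set.Icc (0 : ℝ) (1/2), HasDerivAt
      (fun y => p * (1 + y) ^ (p - 1) - p * (1 - y) ^ (p - 1) - 2 * p * (p - 1) * y)
      (p * (p - 1) * (((1 + y) ^ (p - 2) - 1) + ((1 - y) ^ (p - 2) - 1))) y := by
    intro y hy
    have h₁ := ((hasDerivAt_id y).const_add 1).rpow_const (p := p - 1) (Or.inl (h_ne y hy).1)
    have h₂ := ((hasDerivAt_id y).const_sub 1).rpow_const (p := p - 1) (Or.inl (h_ne y hy).2)
    refine (((h₁.const_mul p).sub (h₂.const_mul p)).sub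
      ((hasDerivAt_id y).const_mul (2 * p * (p - 1)))).congr_deriv ?_
    rw [show p - 1 - 1 = p - 2 by ring]
    simp only [id]; ring
  have hu'' : ∀ y ∈ Set.Ico (0 : ℝ) (1/2),
      |p * (p - 1) * (((1 + y) ^ (p - 2) - 1) + ((1 - y) ^ (p - 2) - 1))| ≤ 16 * y := by
    rintro y ⟨hy0, hy2⟩
    have e₁ := abs_rpow_sub_one_le (s := p - 2) (a := 1 + y) (by linarith) (by linarith)
      ⟨by linarith, by linarith⟩
    have e₂ := abs_rpow_sub_one_le (s := p - 2) (a := 1 - y) (by linarith) (by linarith)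
      ⟨by linarith, by linarith⟩
    rw [add_sub_cancel_left, abs_of_nonneg hy0] at e₁
    rw [sub_sub_cancel_left, abs_neg, abs_of_nonneg hy0] at e₂
    have hpp : |p * (p - 1)| ≤ 2 := by rw [abs_le]; constructor <;> nlinarith
    calc _ = |p * (p - 1)| * |((1 + y) ^ (p - 2) - 1) + ((1 - y) ^ (p - 2) - 1)| := abs_mul _ _
      _ ≤ 2 * (4 * y + 4 * y) := by
        gcongr
        exact (abs_add_le _ _).trans (add_le_add e₁ e₂)
      _ = 16 * y := by ring
  have h_taylor := abs_le_of_abs_deriv_deriv_le hu hu' (by norm_num) (by norm_num) hu'' hx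
  linarith

theorem abs_rho_sub_le {H : ℝ} (hH : 1/2 ≤ H) (hH1 : H ≤ 1) {m : ℕ} (hm : 2 ≤ m) :
    |rho H m - H * (2 * H - 1) * (m : ℝ) ^ (2 * H - 2)| ≤ 4 / 3 * (m : ℝ) ^ (2 * H - 3) := by
  have hm2 : (2 : ℝ) ≤ m := by exact_mod_cast hm
  have hm0 : (0 : ℝ) < m := by linarith
  set p := 2 * H
  set x : ℝ := (m : ℝ)⁻¹
  have hx : x ∈ Set.Icc (0 : ℝ) (1/2) :=
    ⟨by positivity, by rw [inv_le_comm₀ hm0 (by norm_num)]; linarith⟩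
  have h_scale : ∀ y : ℝ, 0 ≤ 1 + y * x →
      ((m : ℝ) + y) ^ p = (m : ℝ) ^ p * (1 + y * x) ^ p := by
    intro y hy
    rw [← Real.mul_rpow hm0.le hy, mul_add, mul_one, mul_left_comm, mul_inv_cancel₀ hm0.ne', mul_one]
  have h_pow_sub : ∀ k : ℕ, (m : ℝ) ^ (p - k) = (m : ℝ) ^ p * x ^ k := by
    intro k
    rw [Real.rpow_sub hm0, Real.rpow_natCast, inv_pow, div_eq_mul_inv]
  have h_rho : rho H m - H * (2 * H - 1) * (m : ℝ) ^ (p - 2)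
      = (m : ℝ) ^ p / 2 * ((1 + x) ^ p + (1 - x) ^ p - 2 - p * (p - 1) * x ^ 2) := by
    have h₁ := h_scale 1 (by linarith [hx.1])
    have h₂ := h_scale (-1) (by linarith [hx.2])
    simp only [one_mul, neg_one_mul, ← sub_eq_add_neg] at h₁ h₂
    rw [rho, abs_of_nonneg (by positivity), abs_of_nonneg (by positivity),
      abs_of_nonneg (by push_cast; linarith)]
    push_cast
    rw [h₁, h₂, show p - 2 = p - (2 : ℕ) by norm_num, h_pow_sub]
    ring
  rw [h_rho, abs_mul, abs_of_nonneg (by positivity), show p - 3 = p - (3 : ℕ) by norm_num,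
    h_pow_sub]
  calc _ ≤ (m : ℝ) ^ p / 2 * (8 / 3 * x ^ 3) := by
        gcongr
        exact abs_one_add_rpow_add_one_sub_rpow_sub_le (by linarith) (by linarith) hx
    _ = _ := by ring

theorem abs_rho_pow_sub_div_le {q : ℕ} (hq : 1 ≤ q) {m : ℕ} (hm : 2 ≤ m) :
    |rho (1 - 1 / (2 * (q : ℝ))) m ^ q
        - ((2 * (q : ℝ) - 1) * ((q : ℝ) - 1) / (2 * (q : ℝ) ^ 2)) ^ q / m|
      ≤ q * 2 ^ q / (m : ℝ) ^ 2 := by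
  have hq1 : (1 : ℝ) ≤ q := by exact_mod_cast hq
  have hm2 : (2 : ℝ) ≤ m := by exact_mod_cast hm
  have hm0 : (0 : ℝ) < m := by linarith
  set H : ℝ := 1 - 1 / (2 * (q : ℝ))
  have hH : 1 / 2 ≤ H ∧ H ≤ 1 := by
    have : 1 / (2 * (q : ℝ)) ≤ 1 / 2 := by gcongr; linarith
    constructor <;> simp only [H] <;> linarith [show 0 ≤ 1 / (2 * (q : ℝ)) by positivity]
  have h_coeff : H * (2 * H - 1) = (2 * (q : ℝ) - 1) * ((q : ℝ) - 1) / (2 * (q : ℝ) ^ 2) := by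
    simp only [H]; field_simp; ring
  have h_coeff_mem : 0 ≤ H * (2 * H - 1) ∧ H * (2 * H - 1) ≤ 1 := by
    constructor <;> nlinarith
  set μ : ℝ := (m : ℝ) ^ (2 * H - 2)
  have hμ : 0 < μ := Real.rpow_pos_of_pos hm0 _
  have hμ_pow : μ ^ q = (m : ℝ)⁻¹ := by
    rw [← Real.rpow_natCast, ← Real.rpow_mul hm0.le, ← Real.rpow_neg_one]
    congr 1
    simp only [H]; field_simp; ring
  set c := H * (2 * H - 1) * μ
  have h_err : |rho H m - c| ≤ 2 * μ / m := by
    refine (abs_rho_sub_le hH.1 hH.2 hm).trans ?_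
    rw [show 2 * H - 3 = 2 * H - 2 - 1 by ring, Real.rpow_sub_one hm0.ne', mul_div_assoc]
    gcongr
    norm_num
  have h_max : max |rho H m| |c| ≤ 2 * μ := by
    have hc : |c| ≤ μ := by
      rw [abs_of_nonneg (mul_nonneg h_coeff_mem.1 hμ.le)]
      exact mul_le_of_le_one_left hμ.le h_coeff_mem.2
    have h_err' : 2 * μ / m ≤ μ := by rw [div_le_iff₀ hm0]; nlinarith
    refine max_le ?_ (by linarith)
    linarith [abs_sub_abs_le_abs_sub (rho H m) c]
  calc _ = |rho H m ^ q - c ^ q| := by rw [mul_pow, hμ_pow, h_coeff, div_eq_mul_inv]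
    _ ≤ |rho H m - c| * q * max |rho H m| |c| ^ (q - 1) := abs_pow_sub_pow_le _ _ _
    _ ≤ 2 * μ / m * q * (2 * μ) ^ (q - 1) := by gcongr
    _ = q * (2 * μ * (2 * μ) ^ (q - 1)) / m := by ring
    _ = q * 2 ^ q / (m : ℝ) ^ 2 := by
      rw [← pow_succ', Nat.sub_add_cancel hq, mul_pow, hμ_pow]
      field_simp

theorem abs_sum_Icc_inv_sub_log_le (n : ℕ) :
    |∑ r ∈ Icc 1 n, (r : ℝ)⁻¹ - Real.log n| ≤ 1 := by
  have h_harmonic : ∑ r ∈ Icc 1 n, (r : ℝ)⁻¹ = harmonic n := by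
    simp only [harmonic_eq_sum_Icc, Rat.cast_sum, Rat.cast_inv, Rat.cast_natCast]
  have h_log_mono : Real.log n ≤ Real.log (n + 1 : ℕ) := by
    rcases n.eq_zero_or_pos with rfl | hn
    · simp
    · exact Real.log_le_log (by positivity) (by simp)
  rw [h_harmonic, abs_le]
  constructor
  · linarith [log_add_one_le_harmonic n]
  · linarith [harmonic_le_one_add_log n]

theorem abs_sum_Icc_sub_mul_log_le {a : ℕ → ℝ} {c K : ℝ}
    (h : ∀ r, 2 ≤ r → |a r - c / r| ≤ K / r ^ 2) (n : ℕ) :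
    |∑ r ∈ Icc 1 n, a r - c * Real.log n| ≤ 2 * (|a 1 - c| + K) + |c| := by
  set B := |a 1 - c| + K
  have hK : 0 ≤ K := by
    have := (abs_nonneg _).trans (h 2 le_rfl)
    push_cast at this
    linarith
  have h_term : ∀ r ∈ Icc 1 n, |a r - c / r| ≤ B * ((r : ℝ) ^ 2)⁻¹ := by
    intro r hr
    obtain rfl | hr2 : r = 1 ∨ 2 ≤ r := by rw [mem_Icc] at hr; omega
    · simp [B, hK]
    · refine (h r hr2).trans ?_
      rw [← div_eq_mul_inv]
      gcongr
      exact le_add_of_nonneg_left (abs_nonneg _)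
  have h_inv_sq : ∑ r ∈ Icc 1 n, ((r : ℝ) ^ 2)⁻¹ ≤ 2 := by
    have : Icc 1 n = Ioo 0 (n + 1) := by ext; simp only [mem_Icc, mem_Ioo]; omega
    simpa [this] using sum_Ioo_inv_sq_le (α := ℝ) 0 (n + 1)
  have h_split : ∑ r ∈ Icc 1 n, a r - c * Real.log n
      = ∑ r ∈ Icc 1 n, (a r - c / r)
        + c * (∑ r ∈ Icc 1 n, (r : ℝ)⁻¹ - Real.log n) := by
    simp only [sum_sub_distrib, mul_sub, mul_sum, div_eq_mul_inv]
    ring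
  rw [h_split]
  calc _ ≤ |∑ r ∈ Icc 1 n, (a r - c / r)|
          + |c| * |∑ r ∈ Icc 1 n, (r : ℝ)⁻¹ - Real.log n| := by
        rw [← abs_mul]; exact abs_add_le _ _
    _ ≤ ∑ r ∈ Icc 1 n, B * ((r : ℝ) ^ 2)⁻¹ + |c| * 1 := by
        gcongr
        · exact (abs_sum_le_sum_abs _ _).trans (sum_le_sum h_term)
        · exact abs_sum_Icc_inv_sub_log_le n
    _ ≤ 2 * B + |c| := by
        rw [← mul_sum, mul_one, mul_comm]
        gcongr

/-- For `q ≥ 2` and `H = 1−1/(2q)`, there is `C > 0` such that for every `n ≥ 2`,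
`|Σ_{r=1}^n ρ_H(r)^q − c_q log n| ≤ C` with `c_q = ((2q−1)(q−1)/(2q²))^q`. -/
theorem partial_sum_rho_pow (q : ℕ) (hq : 2 ≤ q) :
    ∃ C > 0, ∀ n : ℕ, 2 ≤ n →
      |(∑ r ∈ Icc 1 n, rho (1 - 1/(2*(q:ℝ))) (r:ℤ) ^ q)
          - ((2*(q:ℝ) - 1) * ((q:ℝ) - 1) / (2*(q:ℝ)^2)) ^ q * Real.log n|
        ≤ C := by
  set a : ℕ → ℝ := fun r => rho (1 - 1/(2*(q:ℝ))) (r:ℤ) ^ q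
  set c : ℝ := ((2*(q:ℝ) - 1) * ((q:ℝ) - 1) / (2*(q:ℝ)^2)) ^ q
  have h_term : ∀ r, 2 ≤ r → |a r - c / r| ≤ q * 2 ^ q / (r : ℝ) ^ 2 :=
    fun r hr => abs_rho_pow_sub_div_le (by omega) hr
  refine ⟨2 * (|a 1 - c| + q * 2 ^ q) + |c| + 1, by positivity, fun n _ => ?_⟩
  linarith [abs_sum_Icc_sub_mul_log_le h_term n]
end

section
/- Fix integers q ≥ 2 and 0 ≤ r ≤ q−2. There exists a constant C > 0 such that for every integer n ≥ 2, Σ (k−l)^{−1} (l−i)^{−(q−1−r)/q} (i−j)^{−(r+1)/q} ≤ C n² log n, where the sum is over all integers 0 ≤ j < i < l < k ≤ n−1. -/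
/-!
Write `p = (r+1)/q ∈ (0,1)`, so the three exponents are `-1`, `p - 1` and `(1-p) - 1`.
Summing from the inside out, `∑_{1 ≤ m ≤ n} m^(p-1) ≤ n^p / p` by concavity of `t ↦ t^p`
(telescoping), and similarly with `1 - p`; since the exponents `p` and `1 - p` add up to `1`,
the sums over `j` and `i` contribute `n / (p (1-p))`. The sum over `l` is a harmonic sum,
at most `1 + log n`, and the sum over `k` adds a factor `n`.
-/

open Finset

theorem mul_rpow_sub_one_le_rpow_add_one_sub {p x : ℝ} (hp0 : 0 ≤ p) (hp1 : p ≤ 1)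
    (hx : 0 ≤ x) : p * (x + 1) ^ (p - 1) ≤ (x + 1) ^ p - x ^ p := by
  have hx1 : 0 < x + 1 := by linarith
  have hbern : (x / (x + 1)) ^ p ≤ 1 - p / (x + 1) := by
    have h := rpow_one_add_le_one_add_mul_self
      (s := -1 / (x + 1)) (by rw [neg_div, neg_le_neg_iff, div_le_one hx1]; linarith) hp0 hp1
    convert h using 2 <;> field_simp <;> ring
  have hscale := mul_le_mul_of_nonneg_right hbern (Real.rpow_nonneg hx1.le p)
  rw [Real.div_rpow hx hx1.le, div_mul_cancel₀ _ (Real.rpow_pos_of_pos hx1 p).ne'] at hscale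
  rw [Real.rpow_sub_one hx1.ne']
  have hexpand : (1 - p / (x + 1)) * (x + 1) ^ p = (x + 1) ^ p - p * ((x + 1) ^ p / (x + 1)) := by
    ring
  linarith

theorem sum_range_rpow_sub_one_le {p : ℝ} (hp0 : 0 < p) (hp1 : p ≤ 1) (s : ℕ) :
    ∑ m ∈ range s, ((m : ℝ) + 1) ^ (p - 1) ≤ (s : ℝ) ^ p / p := by
  rw [le_div_iff₀' hp0, mul_sum]
  calc ∑ m ∈ range s, p * ((m : ℝ) + 1) ^ (p - 1)
      ≤ ∑ m ∈ range s, ((((m + 1 : ℕ) : ℝ)) ^ p - (m : ℝ) ^ p) := by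
        gcongr with m
        push_cast
        exact mul_rpow_sub_one_le_rpow_add_one_sub hp0.le hp1 m.cast_nonneg
    _ = (s : ℝ) ^ p := by
        rw [sum_range_sub (fun m : ℕ => (m : ℝ) ^ p)]
        simp [Real.zero_rpow hp0.ne']

theorem sum_range_natCast_sub {M : Type*} [AddCommMonoid M] (f : ℝ → M) (s : ℕ) :
    ∑ j ∈ range s, f ((s : ℝ) - j) = ∑ m ∈ range s, f ((m : ℝ) + 1) := by
  rw [← sum_range_reflect]
  refine sum_congr rfl fun j hj => congrArg f ?_
  have hjs := mem_range.mp hj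
  rw [Nat.sub_sub, Nat.cast_sub (by omega)]
  push_cast
  ring

theorem sum_range_natCast_sub_rpow_le {p : ℝ} (hp0 : 0 < p) (hp1 : p ≤ 1) {s n : ℕ}
    (hs : s ≤ n) : ∑ j ∈ range s, ((s : ℝ) - j) ^ (p - 1) ≤ (n : ℝ) ^ p / p := by
  rw [sum_range_natCast_sub (· ^ (p - 1))]
  calc ∑ m ∈ range s, ((m : ℝ) + 1) ^ (p - 1) ≤ (s : ℝ) ^ p / p :=
        sum_range_rpow_sub_one_le hp0 hp1 s
    _ ≤ (n : ℝ) ^ p / p := by gcongr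

theorem sum_range_natCast_sub_inv_le {k n : ℕ} (hk : k ≤ n) :
    ∑ l ∈ range k, ((k : ℝ) - l) ^ (-1 : ℝ) ≤ 1 + Real.log n := by
  rw [sum_range_natCast_sub (· ^ (-1 : ℝ))]
  calc ∑ m ∈ range k, ((m : ℝ) + 1) ^ (-1 : ℝ) = harmonic k := by
        simp [harmonic, Real.rpow_neg_one]
    _ ≤ 1 + Real.log k := harmonic_le_one_add_log k
    _ ≤ 1 + Real.log n := by
        rcases k.eq_zero_or_pos with rfl | hk0
        · simpa using Real.log_natCast_nonneg n
        · gcongr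

theorem nested_sum_range_mul_le {f g h : ℕ → ℕ → ℝ} {F G H : ℝ}
    {n : ℕ} (hf : ∀ k ≤ n, ∑ l ∈ range k, f k l ≤ F) (hg : ∀ l ≤ n, ∑ i ∈ range l, g l i ≤ G)
    (hh : ∀ i ≤ n, ∑ j ∈ range i, h i j ≤ H) (hf0 : ∀ k l, l < k → 0 ≤ f k l)
    (hg0 : ∀ l i, i < l → 0 ≤ g l i) :
    ∑ k ∈ range n, ∑ l ∈ range k, ∑ i ∈ range l, ∑ j ∈ range i, f k l * g l i * h i j
      ≤ n * (F * (G * H)) := by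
  have hG : 0 ≤ G := by simpa using hg 0 (Nat.zero_le n)
  have hH : 0 ≤ H := by simpa using hh 0 (Nat.zero_le n)
  calc ∑ k ∈ range n, ∑ l ∈ range k, ∑ i ∈ range l, ∑ j ∈ range i, f k l * g l i * h i j
      = ∑ k ∈ range n, ∑ l ∈ range k, f k l * ∑ i ∈ range l, g l i * ∑ j ∈ range i, h i j := by
        simp only [mul_sum, mul_assoc]
    _ ≤ ∑ k ∈ range n, ∑ l ∈ range k, f k l * ∑ i ∈ range l, g l i * H := by
        gcongr with k hk l hl i hi
        · exact hf0 k l (mem_range.mp hl)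
        · exact hg0 l i (mem_range.mp hi)
        · simp only [mem_range] at hk hl hi
          exact hh i (by omega)
    _ ≤ ∑ k ∈ range n, ∑ l ∈ range k, f k l * (G * H) := by
        gcongr with k hk l hl
        · exact hf0 k l (mem_range.mp hl)
        · rw [← sum_mul]
          gcongr
          simp only [mem_range] at hk hl
          exact hg l (by omega)
    _ ≤ ∑ k ∈ range n, F * (G * H) := by
        gcongr with k hk
        rw [← sum_mul]
        gcongr
        exact hf k (mem_range.mp hk).le
    _ = n * (F * (G * H)) := by simp

theorem one_add_log_le_mul_log {x : ℝ} (hx : 2 ≤ x) :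
    1 + Real.log x ≤ (1 + (Real.log 2)⁻¹) * Real.log x := by
  have hlog2 : 0 < Real.log 2 := Real.log_pos one_lt_two
  have hlog : Real.log 2 ≤ Real.log x := Real.log_le_log two_pos hx
  have : 1 ≤ (Real.log 2)⁻¹ * Real.log x := by rwa [inv_mul_eq_div, one_le_div hlog2]
  linarith

theorem natCast_sub_rpow_nonneg {k l : ℕ} (h : l < k) (s : ℝ) : 0 ≤ ((k : ℝ) - l) ^ s :=
  Real.rpow_nonneg (sub_nonneg.2 (by exact_mod_cast h.le)) s

theorem quadruple_sum_bound_general (q r : ℕ) (hr : r + 2 ≤ q) :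
    ∃ C > 0, ∀ n : ℕ, 2 ≤ n →
      ∑ k ∈ range n, ∑ l ∈ range k, ∑ i ∈ range l, ∑ j ∈ range i,
          ((k:ℝ) - (l:ℝ)) ^ (-1 : ℝ) *
            ((l:ℝ) - (i:ℝ)) ^ (-(((q:ℝ) - 1 - (r:ℝ)) / (q:ℝ))) *
            ((i:ℝ) - (j:ℝ)) ^ (-(((r:ℝ) + 1) / (q:ℝ)))
        ≤ C * (n:ℝ) ^ 2 * Real.log n := by
  have hrq : (r : ℝ) + 2 ≤ q := by exact_mod_cast hr
  have hq : (0 : ℝ) < q := by linarith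
  set p : ℝ := ((r : ℝ) + 1) / q with hp
  have hp0 : 0 < p := by positivity
  have hp1 : p < 1 := by rw [hp, div_lt_one hq]; linarith
  have hexp : -(((q : ℝ) - 1 - r) / q) = p - 1 := by rw [hp]; field_simp; ring
  refine ⟨(1 + (Real.log 2)⁻¹) / (p * (1 - p)), by positivity, fun n hn => ?_⟩
  rw [hexp, show -p = (1 - p) - 1 by ring]
  have hn2 : (2 : ℝ) ≤ n := by exact_mod_cast hn
  calc _ ≤ n * ((1 + Real.log n) * ((n : ℝ) ^ p / p * ((n : ℝ) ^ (1 - p) / (1 - p)))) :=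
        nested_sum_range_mul_le
          (fun _ hk => sum_range_natCast_sub_inv_le hk)
          (fun _ hl => sum_range_natCast_sub_rpow_le hp0 hp1.le hl)
          (fun _ hi => sum_range_natCast_sub_rpow_le (by linarith) (by linarith) hi)
          (fun _ _ h => natCast_sub_rpow_nonneg h _) (fun _ _ h => natCast_sub_rpow_nonneg h _)
    _ = (n : ℝ) ^ 2 * (1 + Real.log n) / (p * (1 - p)) := by
        rw [div_mul_div_comm, ← Real.rpow_add (by linarith), add_sub_cancel, Real.rpow_one]
        ring
    _ ≤ (n : ℝ) ^ 2 * ((1 + (Real.log 2)⁻¹) * Real.log n) / (p * (1 - p)) := by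
        gcongr
        exact one_add_log_le_mul_log hn2
    _ = (1 + (Real.log 2)⁻¹) / (p * (1 - p)) * (n : ℝ) ^ 2 * Real.log n := by ring

/-- Key combinatorial bound for the quadruple sum in the proof of Theorem 1.2:
for integers `q ≥ 2` and `0 ≤ r ≤ q−2`, there is `C > 0` such that for every `n ≥ 2`,
`Σ_{0 ≤ j < i < l < k ≤ n−1} (k−l)^{−1} (l−i)^{−(q−1−r)/q} (i−j)^{−(r+1)/q} ≤ C n² log n`. -/
theorem quadruple_sum_bound (q r : ℕ) (hq : 2 ≤ q) (hr : r + 2 ≤ q) :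
    ∃ C > 0, ∀ n : ℕ, 2 ≤ n →
      ∑ k ∈ range n, ∑ l ∈ range k, ∑ i ∈ range l, ∑ j ∈ range i,
          ((k:ℝ) - (l:ℝ)) ^ (-1 : ℝ) *
            ((l:ℝ) - (i:ℝ)) ^ (-(((q:ℝ) - 1 - (r:ℝ)) / (q:ℝ))) *
            ((i:ℝ) - (j:ℝ)) ^ (-(((r:ℝ) + 1) / (q:ℝ)))
        ≤ C * (n:ℝ) ^ 2 * Real.log n :=
  quadruple_sum_bound_general q r hr
end
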